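/- arXiv:2310.11734 — 5 statements merged into one kernel-verified Lean document; each statement's English description precedes it below -/
import Mathlib

section
/- Let {P_n} be the Brenke polynomial sequence associated with (a_k) and (b_k), and suppose {P_n} is a d-orthogonal polynomial set for some integer d ≥ 1. Then for every n ≥ d+1 one has ∑_{i=0}^{d+1} ( ∑_{j=i}^{d+1} a_{j+1}·â_{d+1−j} ) · Δ_{n−i} = 0, where â : ℕ → ℂ is defined by â_0 = 1 and ∑_{k=0}^{n} â_k a_{n−k} = 0 for all n ≥ 1 (the coefficients of the reciprocal of the formal power series A(t) = ∑_k a_k t^k). -/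
/-!
A polynomial of degree `< N` killed by every `u k (X ^ j * ·)` with `j * d + k < N` vanishes,
so `d`-orthogonality forces the recurrence `X * P n = ∑_{i ≤ d+1} γ i * P (n + 1 - i)`.
Comparing the coefficients of `X ^ (n + 1 - m)` in the Brenke form gives
`∑_{i ≤ m} γ i * a (m - i) = a m * r (n - m)` for `m ≤ d + 2` (with `r (-1) = 0`): the series
`(∑ γ i t^i) * A(t)` agrees with `∑ a m r (n - m) t^m` up to degree `d + 2`. Multiplying by
`Â = A⁻¹` and reading off the coefficient `γ (d + 2) = 0` yields
`∑_{m ≤ d+2} a m * â (d + 2 - m) * r (n - m) = 0`, which is the claim after summation by parts.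
-/

namespace PowerSeries

variable {R : Type*} [Semiring R]

theorem coeff_mk_mul_mk (f g : ℕ → R) (n : ℕ) :
    coeff n (mk f * mk g) = ∑ k ∈ Finset.range (n + 1), f k * g (n - k) := by
  rw [coeff_mul, Finset.Nat.sum_antidiagonal_eq_sum_range_succ_mk]
  simp only [coeff_mk]

theorem mk_mul_mk_eq_one {f g : ℕ → R} (h0 : f 0 * g 0 = 1)
    (h : ∀ n, 1 ≤ n → ∑ k ∈ Finset.range (n + 1), f k * g (n - k) = 0) :
    mk f * mk g = 1 := by
  ext n
  rw [coeff_mk_mul_mk, coeff_one]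
  rcases n with _ | n
  · simpa using h0
  · simpa using h (n + 1) (by omega)

theorem coeff_eq_coeff_mul_of_forall_le {f g g' h : R⟦X⟧} (hg : g * g' = 1) {N : ℕ}
    (hfg : ∀ m ≤ N, coeff m (f * g) = coeff m h) : coeff N f = coeff N (h * g') := by
  rw [← mul_one f, ← hg, ← mul_assoc, coeff_mul, coeff_mul]
  exact Finset.sum_congr rfl fun p hp => by
    rw [hfg p.1 (Finset.HasAntidiagonal.antidiagonal.fst_le hp)]

end PowerSeries

open Finset Polynomial

theorem sum_Icc_mul_sub_eq_neg_sum {R : Type*} [CommRing R] (e f : ℕ → R) (D : ℕ)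
    (he : ∑ m ∈ range (D + 2), e m = 0) :
    ∑ i ∈ range (D + 1), (∑ j ∈ Icc i D, e (j + 1)) * (f i - f (i + 1)) =
      -∑ m ∈ range (D + 2), e m * f m := by
  have htail : ∀ i ≤ D, ∑ j ∈ Icc i D, e (j + 1) = -∑ m ∈ range (i + 1), e m := by
    intro i hi
    rw [eq_neg_iff_add_eq_zero, ← Ico_add_one_right_eq_Icc, sum_Ico_add', add_comm,
      sum_range_add_sum_Ico e (by omega), he]
  rw [sum_congr rfl fun i hi => by rw [htail i (by simpa [Nat.lt_succ_iff] using hi)]]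
  have := sum_range_by_parts f e (D + 2)
  simp only [smul_eq_mul, he, mul_zero, zero_sub, show D + 2 - 1 = D + 1 from rfl] at this
  rw [sum_congr rfl fun m _ => mul_comm (e m) (f m), this, neg_neg]
  exact sum_congr rfl fun i _ => by ring

section Elimination

variable {K : Type*} [Field K]

theorem degree_sub_C_mul_lt {p q : K[X]} {M : ℕ} (hp : p.degree ≤ M) (hq : q.degree = M) :
    (p - C (p.coeff M / q.leadingCoeff) * q).degree < M := by
  have hlc : q.coeff M = q.leadingCoeff := by
    rw [leadingCoeff, natDegree_eq_of_degree_eq_some hq]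
  have hq0 : q.leadingCoeff ≠ 0 := leadingCoeff_ne_zero.mpr (by rintro rfl; simp at hq)
  refine degree_lt_iff_coeff_zero _ _ |>.mpr fun e he => ?_
  rw [coeff_sub, coeff_C_mul]
  rcases (Nat.cast_le.mp he).eq_or_lt with rfl | hlt
  · rw [hlc, div_mul_cancel₀ _ hq0, sub_self]
  · rw [coeff_eq_zero_of_degree_lt (hp.trans_lt (by exact_mod_cast hlt)),
      coeff_eq_zero_of_degree_lt (hq.trans_lt (by exact_mod_cast hlt)), mul_zero, sub_zero]

theorem exists_degree_sub_sum_lt {P : ℕ → K[X]} (hP : ∀ m, (P m).degree = m) {p : K[X]}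
    {N : ℕ} (hp : p.degree ≤ N) {L : ℕ} (hL : L ≤ N + 1) :
    ∃ γ : ℕ → K, (∀ i, L ≤ i → γ i = 0) ∧
      (p - ∑ i ∈ range L, C (γ i) * P (N - i)).degree < ↑(N + 1 - L) := by
  induction L with
  | zero => exact ⟨0, fun _ _ => rfl, by
    rw [sum_range_zero, sub_zero]; exact Order.lt_succ_of_le hp⟩
  | succ L ih =>
    obtain ⟨γ, hγ, hdeg⟩ := ih (by omega)
    set q := p - ∑ i ∈ range L, C (γ i) * P (N - i)
    have hq : q.degree ≤ ↑(N - L) :=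
      Order.le_of_lt_succ (by rwa [show N + 1 - L = N - L + 1 by omega] at hdeg)
    refine ⟨Function.update γ L (q.coeff (N - L) / (P (N - L)).leadingCoeff),
      fun i hi => by rw [Function.update_of_ne (by omega), hγ i (by omega)], ?_⟩
    rw [sum_range_succ, Function.update_self,
      sum_congr rfl fun i hi => by rw [Function.update_of_ne (by simp at hi; omega)], ← sub_sub,
      show N + 1 - (L + 1) = N - L by omega]
    exact degree_sub_C_mul_lt hq (hP _)

end Elimination

section DOrthogonal

variable {K : Type*} [Field K]

theorem map_X_pow_mul_C_mul (u : K[X] →ₗ[K] K) (j : ℕ) (c : K) (p : K[X]) :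
    u (X ^ j * (C c * p)) = c * u (X ^ j * p) := by
  rw [mul_left_comm, ← smul_eq_C_mul, map_smul, smul_eq_mul]

def IsDOrthogonal (d : ℕ) (P : ℕ → K[X]) (u : Fin d → K[X] →ₗ[K] K) : Prop :=
  ∀ k : Fin d,
    (∀ m n : ℕ, n > m * d + (k : ℕ) → u k (X ^ m * P n) = 0) ∧
    (∀ m : ℕ, u k (X ^ m * P (m * d + (k : ℕ))) ≠ 0)

namespace IsDOrthogonal

variable {d : ℕ} {P : ℕ → K[X]} {u : Fin d → K[X] →ₗ[K] K}

theorem eq_zero_of_degree_lt (hu : IsDOrthogonal d P u) (hd : 0 < d)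
    (hP : ∀ m, (P m).degree = m) {N : ℕ} {Q : K[X]} (hQ : Q.degree < N)
    (hQu : ∀ (k : Fin d) (j : ℕ), j * d + k < N → u k (X ^ j * Q) = 0) : Q = 0 := by
  induction N generalizing Q with
  | zero => exact degree_eq_bot.mp (Nat.WithBot.lt_zero_iff.mp hQ)
  | succ N ih =>
    set c := Q.coeff N / (P N).leadingCoeff
    have hQc : Q = C c * P N := by
      refine sub_eq_zero.mp <|
        ih (degree_sub_C_mul_lt (Order.le_of_lt_succ hQ) (hP N)) fun k j hj => ?_
      rw [mul_sub, map_sub, map_X_pow_mul_C_mul, hQu k j (by omega), (hu k).1 j N hj, mul_zero,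
        sub_zero]
    obtain ⟨k, j, rfl⟩ : ∃ (k : Fin d) (j : ℕ), j * d + k = N :=
      ⟨⟨N % d, Nat.mod_lt N hd⟩, N / d, Nat.div_add_mod' N d⟩
    have hc : c * u k (X ^ j * P (j * d + k)) = 0 := by
      rw [← map_X_pow_mul_C_mul, ← hQc]
      exact hQu k j (by omega)
    rw [hQc, (mul_eq_zero.mp hc).resolve_right ((hu k).2 j), C_0, zero_mul]

theorem exists_X_mul_eq_sum (hu : IsDOrthogonal d P u) (hd : 0 < d)
    (hP : ∀ m, (P m).degree = m) {n : ℕ} (hn : d ≤ n) :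
    ∃ γ : ℕ → K, (∀ i, d + 2 ≤ i → γ i = 0) ∧
      X * P n = ∑ i ∈ range (n + 2), C (γ i) * P (n + 1 - i) := by
  obtain ⟨γ, hγ, hdeg⟩ := exists_degree_sub_sum_lt hP (p := X * P n) (N := n + 1)
    (by rw [X_mul, degree_mul_X, hP]; rfl) (L := d + 2) (by omega)
  refine ⟨γ, hγ, ?_⟩
  rw [← sum_subset (range_subset_range.mpr (by omega : d + 2 ≤ n + 2)) fun i _ hi => by
    rw [hγ i (by simpa using hi), C_0, zero_mul]]
  refine sub_eq_zero.mp (hu.eq_zero_of_degree_lt hd hP (N := n - d)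
    (by rwa [show n + 1 + 1 - (d + 2) = n - d by omega] at hdeg) fun k j hj => ?_)
  rw [mul_sub, mul_sum, map_sub, map_sum, ← mul_assoc, ← pow_succ,
    (hu k).1 _ _ (by rw [add_one_mul]; omega), zero_sub, neg_eq_zero]
  refine sum_eq_zero fun i hi => ?_
  rw [map_X_pow_mul_C_mul, (hu k).1 _ _ (by simp at hi; omega), mul_zero]

end IsDOrthogonal

end DOrthogonal

section Brenke

variable {R : Type*}

noncomputable def brenkePoly [Semiring R] (a b : ℕ → R) (n : ℕ) : R[X] :=
  ∑ k ∈ range (n + 1), C (a (n - k) * b k) * X ^ k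

variable (a b : ℕ → R)

theorem coeff_brenkePoly [Semiring R] (n e : ℕ) :
    (brenkePoly a b n).coeff e = if e ≤ n then a (n - e) * b e else 0 := by
  simp only [brenkePoly, finsetSum_coeff, coeff_C_mul, coeff_X_pow, mul_ite, mul_one, mul_zero,
    sum_ite_eq, mem_range, Nat.lt_succ_iff]

theorem degree_brenkePoly [Semiring R] [NoZeroDivisors R] {n : ℕ} (ha0 : a 0 ≠ 0)
    (hb : b n ≠ 0) :
    (brenkePoly a b n).degree = n := by
  refine degree_eq_of_le_of_coeff_ne_zero ((degree_le_iff_coeff_zero _ _).mpr fun e he => ?_) ?_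
  · rw [coeff_brenkePoly, if_neg (by exact_mod_cast he.not_ge)]
  · simp [coeff_brenkePoly, ha0, hb]

theorem coeff_X_mul_brenkePoly [Semiring R] {n e : ℕ} (he : e ≤ n + 1) :
    (X * brenkePoly a b n).coeff e = a (n + 1 - e) * if e = 0 then 0 else b (e - 1) := by
  rcases e with _ | e
  · simp
  · simp [coeff_X_mul, coeff_brenkePoly, show e ≤ n by omega]

theorem coeff_sum_C_mul_brenkePoly [CommSemiring R] (γ : ℕ → R) {N e : ℕ} (he : e ≤ N) :
    (∑ i ∈ range (N + 1), C (γ i) * brenkePoly a b (N - i)).coeff e =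
      PowerSeries.coeff (N - e) (PowerSeries.mk γ * PowerSeries.mk a) * b e := by
  simp only [finsetSum_coeff, coeff_C_mul, coeff_brenkePoly, PowerSeries.coeff_mk_mul_mk, sum_mul]
  refine (sum_subset (range_subset_range.mpr (by omega : N - e + 1 ≤ N + 1))
    fun i hi hi' => ?_).symm.trans (sum_congr rfl fun i hi => ?_)
  · rw [mem_range] at hi hi'
    rw [if_neg (show ¬e ≤ N - i by omega), mul_zero]
  · rw [mem_range] at hi
    rw [if_pos (show e ≤ N - i by omega), Nat.sub_right_comm, mul_assoc]

end Brenke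

theorem brenke_d_orthogonal_necessary_condition_general
    (a b : ℕ → ℂ) (ha0 : a 0 = 1) (hb : ∀ k, b k ≠ 0)
    (P : ℕ → Polynomial ℂ)
    (hP : ∀ n, P n = ∑ k ∈ Finset.range (n + 1), Polynomial.C (a (n - k) * b k) * X ^ k)
    (d : ℕ) (hd : 1 ≤ d)
    (horth : ∃ u : Fin d → (Polynomial ℂ →ₗ[ℂ] ℂ),
      ∀ k : Fin d,
        (∀ m n : ℕ, n > m * d + (k : ℕ) → u k (X ^ m * P n) = 0) ∧
        (∀ m : ℕ, u k (X ^ m * P (m * d + (k : ℕ))) ≠ 0))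
    (ahat : ℕ → ℂ) (hahat0 : ahat 0 = 1)
    (hahat : ∀ n, 1 ≤ n → ∑ k ∈ Finset.range (n + 1), ahat k * a (n - k) = 0)
    (r : ℕ → ℂ) (hr : ∀ n, r n = b n / b (n + 1))
    (Δ : ℕ → ℂ) (hΔ0 : Δ 0 = r 0) (hΔ : ∀ n, Δ (n + 1) = r (n + 1) - r n) :
    ∀ n, d + 1 ≤ n →
      ∑ i ∈ Finset.range (d + 2),
        (∑ j ∈ Finset.Icc i (d + 1), a (j + 1) * ahat (d + 1 - j)) * Δ (n - i) = 0 := by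
  obtain rfl : P = brenkePoly a b := funext hP
  obtain ⟨u, hu⟩ := horth
  intro n hn
  obtain ⟨γ, hγ, hrec⟩ := IsDOrthogonal.exists_X_mul_eq_sum hu hd
    (fun m => degree_brenkePoly a b (by simp [ha0]) (hb m)) (n := n) (by omega)
  -- `ρ k = r (k - 1)` with the convention `r (-1) = 0`
  set ρ : ℕ → ℂ := fun k => if k = 0 then 0 else r (k - 1) with hρ
  have hΔρ : ∀ k, Δ k = ρ (k + 1) - ρ k := by
    rintro (_ | k) <;> simp [hρ, hΔ0, hΔ]
  have hbρ : ∀ e, (if e = 0 then 0 else b (e - 1)) = ρ e * b e := by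
    rintro (_ | e) <;> simp [hρ, hr, hb]
  have hinv : PowerSeries.mk a * PowerSeries.mk ahat = 1 := by
    rw [mul_comm]; exact PowerSeries.mk_mul_mk_eq_one (by rw [ha0, hahat0, one_mul]) hahat
  have hrec_coeff : ∀ m ≤ d + 2, PowerSeries.coeff m (PowerSeries.mk γ * PowerSeries.mk a) =
      PowerSeries.coeff m (PowerSeries.mk fun m => a m * ρ (n + 1 - m)) := by
    intro m hm
    have h := congrArg (coeff · (n + 1 - m)) hrec
    rw [coeff_X_mul_brenkePoly a b (by omega), hbρ, ← mul_assoc,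
      coeff_sum_C_mul_brenkePoly a b γ (by omega), Nat.sub_sub_self (by omega)] at h
    rw [PowerSeries.coeff_mk, mul_right_cancel₀ (hb _) h.symm]
  have hkey := PowerSeries.coeff_eq_coeff_mul_of_forall_le hinv hrec_coeff
  rw [PowerSeries.coeff_mk, hγ _ le_rfl, PowerSeries.coeff_mk_mul_mk] at hkey
  have htotal : ∑ m ∈ range (d + 3), a m * ahat (d + 2 - m) = 0 := by
    rw [← PowerSeries.coeff_mk_mul_mk, hinv, PowerSeries.coeff_one, if_neg (by omega)]
  calc _ = ∑ i ∈ range (d + 2), (∑ j ∈ Icc i (d + 1), a (j + 1) * ahat (d + 2 - (j + 1))) *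
        (ρ (n + 1 - i) - ρ (n + 1 - (i + 1))) := by
        refine sum_congr rfl fun i hi => ?_
        rw [mem_range] at hi
        rw [hΔρ, show n - i + 1 = n + 1 - i by omega, show n - i = n + 1 - (i + 1) by omega]
        congr 1
        exact sum_congr rfl fun j _ => by rw [show d + 2 - (j + 1) = d + 1 - j by omega]
    _ = -∑ m ∈ range (d + 3), a m * ahat (d + 2 - m) * ρ (n + 1 - m) :=
        sum_Icc_mul_sub_eq_neg_sum (fun m => a m * ahat (d + 2 - m)) _ (d + 1) htotal
    _ = 0 := by
        rw [neg_eq_zero, hkey.trans (sum_congr rfl fun m _ => mul_right_comm _ _ _)]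

/-- For a Brenke polynomial sequence which is `d`-orthogonal (`d ≥ 1`),
for every `n ≥ d+1` one has
`∑_{i=0}^{d+1} (∑_{j=i}^{d+1} a_{j+1}·â_{d+1−j}) · Δ_{n−i} = 0`. -/
theorem brenke_d_orthogonal_necessary_condition
    (a b : ℕ → ℂ) (ha0 : a 0 = 1) (hb0 : b 0 = 1) (hb : ∀ k, b k ≠ 0)
    (P : ℕ → Polynomial ℂ)
    (hP : ∀ n, P n = ∑ k ∈ Finset.range (n + 1), Polynomial.C (a (n - k) * b k) * X ^ k)
    (d : ℕ) (hd : 1 ≤ d)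
    (horth : ∃ u : Fin d → (Polynomial ℂ →ₗ[ℂ] ℂ),
      ∀ k : Fin d,
        (∀ m n : ℕ, n > m * d + (k : ℕ) → u k (X ^ m * P n) = 0) ∧
        (∀ m : ℕ, u k (X ^ m * P (m * d + (k : ℕ))) ≠ 0))
    (ahat : ℕ → ℂ) (hahat0 : ahat 0 = 1)
    (hahat : ∀ n, 1 ≤ n → ∑ k ∈ Finset.range (n + 1), ahat k * a (n - k) = 0)
    (r : ℕ → ℂ) (hr : ∀ n, r n = b n / b (n + 1))
    (Δ : ℕ → ℂ) (hΔ0 : Δ 0 = r 0) (hΔ : ∀ n, Δ (n + 1) = r (n + 1) - r n) :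
    ∀ n, d + 1 ≤ n →
      ∑ i ∈ Finset.range (d + 2),
        (∑ j ∈ Finset.Icc i (d + 1), a (j + 1) * ahat (d + 1 - j)) * Δ (n - i) = 0 :=
  brenke_d_orthogonal_necessary_condition_general a b ha0 hb P hP d hd horth ahat hahat0 hahat r hr
    Δ hΔ0 hΔ
end

section
/- Let {P_n} be the Brenke polynomial sequence associated with (a_k) and (b_k), and suppose {P_n} is a d-orthogonal polynomial set for some integer d ≥ 1. Then (d+1) consecutive numbers Δ_n cannot all vanish, i.e. for every n ≥ 0 the numbers Δ_n, Δ_{n+1}, …, Δ_{n+d} are not all zero; and likewise (d+1) consecutive coefficients a_n cannot all vanish, i.e. for every n ≥ 0 the numbers a_n, a_{n+1}, …, a_{n+d} are not all zero. -/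
/-!
Expanding `X * P N` in the basis `(P i)` and applying `u k (X ^ m * ·)` shows that a
`d`-orthogonal sequence satisfies a recurrence `X P_N = ∑_{i = N-d}^{N+1} c_i P_i` with
`c_{N-d} ≠ 0`.

For a Brenke sequence, the coefficient of `x^s` in `X P_N - ρ P_{N+1}` is
`a_{N+1-s} b_s (r_{s-1} - ρ)`. If `d + 1` consecutive `Δ`s vanish, `r` is constant on
`[N-d-1, N]`, so for `ρ = r_N` this polynomial has degree `< N - d`, forcing `c_{N-d} = 0`.
If `a_{n+1}, …, a_{n+1+d}` vanish, the coefficient of `x` in the recurrence for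
`N = n + 1 + d` reads `0 = c_{n+1} a_n b_1`, so `a_n = 0`; descending to `a_0 = 0` is absurd.
-/

open Finset Polynomial

namespace Polynomial.Sequence

variable {K : Type*} [Field K] (S : Sequence K)

lemma isUnit_leadingCoeff (i : ℕ) : IsUnit (S i).leadingCoeff :=
  (leadingCoeff_ne_zero.mpr (S.ne_zero i)).isUnit

lemma repr_eq_zero_of_degree_lt {Q : K[X]} {i : ℕ} (h : Q.degree < i) :
    (S.basis S.isUnit_leadingCoeff).repr Q i = 0 := by
  have hQ : Q ∈ Submodule.span K (S.basis S.isUnit_leadingCoeff '' Set.Iio i) := by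
    rw [show ⇑(S.basis S.isUnit_leadingCoeff) = S from _root_.funext (S.basis_eq_self _),
      S.span_degreeLT fun j _ => S.isUnit_leadingCoeff j]
    exact mem_degreeLT.mpr h
  by_contra hi
  exact lt_irrefl i (Module.Basis.mem_span_image _ |>.mp hQ (Finsupp.mem_support_iff.mpr hi))

lemma apply_eq_sum_repr (v : K[X] →ₗ[K] K) (Q : K[X]) :
    v Q = ((S.basis S.isUnit_leadingCoeff).repr Q).sum fun i c => c * v (S i) := by
  conv_lhs => rw [← (S.basis S.isUnit_leadingCoeff).linearCombination_repr Q]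
  rw [Finsupp.apply_linearCombination, Finsupp.linearCombination_apply]
  simp

end Polynomial.Sequence

lemma Nat.exists_eq_mul_add_fin {d : ℕ} (hd : 0 < d) (j : ℕ) :
    ∃ (m : ℕ) (k : Fin d), j = m * d + k :=
  ⟨j / d, ⟨j % d, Nat.mod_lt j hd⟩, (Nat.div_add_mod' j d).symm⟩

section DOrthogonal

variable {K : Type*} [Field K]

def IsDOrthogonalWith (P : ℕ → K[X]) (d : ℕ) (u : Fin d → K[X] →ₗ[K] K) : Prop :=
  ∀ k : Fin d, (∀ m n : ℕ, n > m * d + (k : ℕ) → u k (X ^ m * P n) = 0) ∧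
    ∀ m : ℕ, u k (X ^ m * P (m * d + (k : ℕ))) ≠ 0

namespace IsDOrthogonalWith

variable {S : Sequence K} {d : ℕ} {u : Fin d → K[X] →ₗ[K] K}

lemma apply_X_pow_mul_eq (hu : IsDOrthogonalWith S d u) (k : Fin d) (m : ℕ) {Q : K[X]}
    (hQ : ∀ i < m * d + k, (S.basis S.isUnit_leadingCoeff).repr Q i = 0) :
    u k (X ^ m * Q) =
      (S.basis S.isUnit_leadingCoeff).repr Q (m * d + k) * u k (X ^ m * S (m * d + k)) := by
  have h := S.apply_eq_sum_repr ((u k).comp (LinearMap.mulLeft K (X ^ m))) Q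
  simp only [LinearMap.comp_apply, LinearMap.mulLeft_apply] at h
  rw [h, Finsupp.sum_eq_single (m * d + k) _ fun _ => zero_mul _]
  intro i _ hi
  rcases hi.lt_or_gt with hlt | hgt
  · rw [hQ i hlt, zero_mul]
  · rw [(hu k).1 m i hgt, mul_zero]

lemma repr_X_mul_eq_zero (hd : 0 < d) (hu : IsDOrthogonalWith S d u) {N j : ℕ}
    (hj : j + d < N) : (S.basis S.isUnit_leadingCoeff).repr (X * S N) j = 0 := by
  induction j using Nat.strong_induction_on with
  | _ j ih =>
    obtain ⟨m, k, rfl⟩ := Nat.exists_eq_mul_add_fin hd j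
    have hvanish : u k (X ^ (m + 1) * S N) = 0 := (hu k).1 (m + 1) N (by rw [add_mul]; omega)
    rw [pow_succ, mul_assoc, hu.apply_X_pow_mul_eq k m fun i hi => ih i hi (by omega)]
      at hvanish
    exact (mul_eq_zero.mp hvanish).resolve_right ((hu k).2 m)

lemma repr_X_mul_ne_zero (hd : 0 < d) (hu : IsDOrthogonalWith S d u) {N : ℕ} (hN : d ≤ N) :
    (S.basis S.isUnit_leadingCoeff).repr (X * S N) (N - d) ≠ 0 := by
  obtain ⟨m, k, hmk⟩ := Nat.exists_eq_mul_add_fin hd (N - d)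
  have hne : u k (X ^ (m + 1) * S N) ≠ 0 := by
    convert (hu k).2 (m + 1) using 4
    rw [add_mul]; omega
  rw [pow_succ, mul_assoc, hu.apply_X_pow_mul_eq k m fun i hi =>
    hu.repr_X_mul_eq_zero hd (by omega), ← hmk] at hne
  exact left_ne_zero_of_mul hne

lemma apply_X_mul_eq_sum (hd : 0 < d) (hu : IsDOrthogonalWith S d u) (v : K[X] →ₗ[K] K)
    (N : ℕ) : v (X * S N) =
      ∑ i ∈ Icc (N - d) (N + 1), (S.basis S.isUnit_leadingCoeff).repr (X * S N) i * v (S i) := by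
  rw [S.apply_eq_sum_repr v, Finsupp.sum_of_support_subset _ _ _ fun _ _ => zero_mul _]
  intro i hi
  rw [Finsupp.mem_support_iff] at hi
  rw [mem_Icc]
  constructor
  · by_contra h
    exact hi (hu.repr_X_mul_eq_zero hd (by omega))
  · by_contra h
    refine hi (S.repr_eq_zero_of_degree_lt ?_)
    rw [mul_comm, degree_mul_X, S.degree_eq]
    exact_mod_cast (by omega : N + 1 < i)

lemma le_degree_X_mul_sub_smul (hd : 0 < d) (hu : IsDOrthogonalWith S d u) {N : ℕ}
    (hN : d ≤ N) (ρ : K) : ((N - d : ℕ) : WithBot ℕ) ≤ (X * S N - ρ • S (N + 1)).degree := by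
  by_contra h
  have h0 := S.repr_eq_zero_of_degree_lt (not_le.mp h)
  rw [map_sub, map_smul, ← S.basis_eq_self S.isUnit_leadingCoeff (N + 1), Module.Basis.repr_self,
    Finsupp.sub_apply, Finsupp.smul_apply, Finsupp.single_eq_of_ne (by omega), smul_zero,
    sub_zero] at h0
  exact hu.repr_X_mul_ne_zero hd hN h0

end IsDOrthogonalWith

end DOrthogonal

section Brenke

noncomputable def brenke {R : Type*} [Semiring R] (a b : ℕ → R) (n : ℕ) : R[X] :=
  ∑ k ∈ range (n + 1), C (a (n - k) * b k) * X ^ k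

lemma coeff_brenke {R : Type*} [Semiring R] (a b : ℕ → R) (n t : ℕ) :
    (brenke a b n).coeff t = if t ≤ n then a (n - t) * b t else 0 := by
  simp only [brenke, finsetSum_coeff, coeff_C_mul, coeff_X_pow, mul_ite, mul_one, mul_zero]
  simp

lemma degree_brenke {R : Type*} [Semiring R] {a b : ℕ → R} {n : ℕ} (h : a 0 * b n ≠ 0) :
    (brenke a b n).degree = n := by
  refine le_antisymm (degree_le_iff_coeff_zero _ _ |>.mpr fun t ht => ?_) ?_
  · rw [coeff_brenke, if_neg (by exact_mod_cast ht.not_ge)]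
  · exact le_degree_of_ne_zero (by rwa [coeff_brenke, if_pos le_rfl, Nat.sub_self])

lemma degree_X_mul_brenke_sub_smul_lt {R : Type*} [CommRing R] {a b : ℕ → R} {M N : ℕ} {ρ : R}
    (hρ : ∀ i, M ≤ i → i ≤ N → b i = ρ * b (i + 1)) :
    (X * brenke a b N - ρ • brenke a b (N + 1)).degree < ↑(M + 1) := by
  refine (degree_lt_iff_coeff_zero _ _).mpr fun s hs => ?_
  obtain ⟨t, rfl⟩ : ∃ t, s = t + 1 := ⟨s - 1, by omega⟩
  rw [coeff_sub, coeff_X_mul, coeff_smul, coeff_brenke, coeff_brenke, smul_eq_mul]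
  by_cases htN : t ≤ N
  · rw [if_pos htN, if_pos (by omega), show N + 1 - (t + 1) = N - t by omega,
      hρ t (by omega) htN]
    ring
  · rw [if_neg htN, if_neg (by omega), mul_zero, sub_zero]

variable {K : Type*} [Field K]

noncomputable def brenkeSequence (a b : ℕ → K) (h : ∀ n, a 0 * b n ≠ 0) : Sequence K :=
  ⟨brenke a b, fun _ => degree_brenke (h _)⟩

@[simp]
lemma coe_brenkeSequence (a b : ℕ → K) (h : ∀ n, a 0 * b n ≠ 0) :
    ⇑(brenkeSequence a b h) = brenke a b :=
  rfl

variable {a b : ℕ → K} {d : ℕ} {u : Fin d → K[X] →ₗ[K] K}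

lemma IsDOrthogonalWith.brenke_not_forall_eq_mul_succ (hab : ∀ n, a 0 * b n ≠ 0) (hd : 0 < d)
    (hu : IsDOrthogonalWith (brenke a b) d u) (n : ℕ) (ρ : K) :
    ¬ ∀ i, n ≤ i → i ≤ n + 1 + d → b i = ρ * b (i + 1) := by
  intro hρ
  have hlow := degree_X_mul_brenke_sub_smul_lt (a := a) hρ
  have hu' : IsDOrthogonalWith (brenkeSequence a b hab) d u := hu
  have hhigh := hu'.le_degree_X_mul_sub_smul hd (N := n + 1 + d) (by omega) ρ
  rw [Nat.add_sub_cancel] at hhigh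
  exact hhigh.not_gt hlow

lemma IsDOrthogonalWith.brenke_eq_zero_of_forall_eq_zero (hab : ∀ n, a 0 * b n ≠ 0)
    (hb1 : b 1 ≠ 0) (hd : 0 < d) (hu : IsDOrthogonalWith (brenke a b) d u) {n : ℕ}
    (hwin : ∀ i ≤ d, a (n + 1 + i) = 0) : a n = 0 := by
  have hu' : IsDOrthogonalWith (brenkeSequence a b hab) d u := hu
  have hrec := hu'.apply_X_mul_eq_sum hd (lcoeff K 1) (n + 1 + d)
  have hc := hu'.repr_X_mul_ne_zero hd (N := n + 1 + d) (by omega)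
  rw [Nat.add_sub_cancel] at hrec hc
  have hlhs : (X * brenke a b (n + 1 + d)).coeff 1 = 0 := by
    rw [coeff_X_mul, coeff_brenke, if_pos (Nat.zero_le _), Nat.sub_zero, hwin d le_rfl, zero_mul]
  have hcoeff_one : ∀ i ∈ Icc (n + 1) (n + 1 + d + 1), i ≠ n + 1 → (brenke a b i).coeff 1 = 0 := by
    intro i hi hin
    rw [mem_Icc] at hi
    rw [coeff_brenke, if_pos (by omega), show i - 1 = n + 1 + (i - 1 - (n + 1)) by omega,
      hwin _ (by omega), zero_mul]
  simp only [coe_brenkeSequence, lcoeff_apply] at hrec hc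
  rw [hlhs, sum_eq_single_of_mem (n + 1) (mem_Icc.mpr ⟨le_rfl, by omega⟩)
    fun i hi hin => by rw [hcoeff_one i hi hin, mul_zero],
    coeff_brenke, if_pos le_add_self, Nat.add_sub_cancel] at hrec
  exact (mul_eq_zero.mp (mul_eq_zero.mp hrec.symm |>.resolve_left hc)).resolve_right hb1

lemma IsDOrthogonalWith.brenke_not_forall_eq_zero (hab : ∀ n, a 0 * b n ≠ 0)
    (hb1 : b 1 ≠ 0) (hd : 0 < d) (hu : IsDOrthogonalWith (brenke a b) d u) (n : ℕ) :
    ¬ ∀ i ≤ d, a (n + i) = 0 := by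
  induction n with
  | zero => exact fun h => left_ne_zero_of_mul (hab 0) (h 0 d.zero_le)
  | succ n ih =>
    intro hwin
    refine ih fun i hi => ?_
    rcases i with _ | i
    · exact hu.brenke_eq_zero_of_forall_eq_zero hab hb1 hd hwin
    · rw [show n + (i + 1) = n + 1 + i by omega]
      exact hwin i (by omega)

end Brenke

theorem brenke_d_orthogonal_no_consecutive_zeros_general
    (a b : ℕ → ℂ) (ha0 : a 0 = 1) (hb : ∀ k, b k ≠ 0)
    (P : ℕ → Polynomial ℂ)
    (hP : ∀ n, P n = ∑ k ∈ Finset.range (n + 1), Polynomial.C (a (n - k) * b k) * X ^ k)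
    (d : ℕ) (hd : 1 ≤ d)
    (horth : ∃ u : Fin d → (Polynomial ℂ →ₗ[ℂ] ℂ),
      ∀ k : Fin d,
        (∀ m n : ℕ, n > m * d + (k : ℕ) → u k (X ^ m * P n) = 0) ∧
        (∀ m : ℕ, u k (X ^ m * P (m * d + (k : ℕ))) ≠ 0))
    (r : ℕ → ℂ) (hr : ∀ n, r n = b n / b (n + 1))
    (Δ : ℕ → ℂ) (hΔ0 : Δ 0 = r 0) (hΔ : ∀ n, Δ (n + 1) = r (n + 1) - r n) :
    ∀ n : ℕ,
      (¬ ∀ i : ℕ, i ≤ d → Δ (n + i) = 0) ∧ (¬ ∀ i : ℕ, i ≤ d → a (n + i) = 0) := by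
  obtain rfl : P = brenke a b := _root_.funext hP
  obtain ⟨u, hu⟩ : ∃ u, IsDOrthogonalWith (brenke a b) d u := horth
  have hab : ∀ n, a 0 * b n ≠ 0 := fun n => by simpa [ha0] using hb n
  intro n
  refine ⟨fun hΔzero => ?_, hu.brenke_not_forall_eq_zero hab (hb 1) hd n⟩
  cases n with
  | zero => exact div_ne_zero (hb 0) (hb 1) (by rw [← hr, ← hΔ0, ← hΔzero 0 d.zero_le])
  | succ n =>
    have hconst : ∀ i, n ≤ i → i ≤ n + 1 + d → r i = r n := by
      intro i hni
      induction i, hni using Nat.le_induction with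
      | base => exact fun _ => rfl
      | succ i hni ih =>
        intro hi
        have hstep := hΔzero (i - n) (by omega)
        rw [show n + 1 + (i - n) = i + 1 by omega, hΔ, sub_eq_zero] at hstep
        rw [hstep, ih (by omega)]
    exact hu.brenke_not_forall_eq_mul_succ hab hd n (r n) fun i hni hi => by
      rw [← hconst i hni hi, hr, div_mul_cancel₀ _ (hb _)]

/-- For a `d`-orthogonal Brenke polynomial sequence, `d+1` consecutive
numbers `Δ_n` cannot all vanish, and `d+1` consecutive coefficients `a_n` cannot all vanish. -/
theorem brenke_d_orthogonal_no_consecutive_zeros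
    (a b : ℕ → ℂ) (ha0 : a 0 = 1) (hb0 : b 0 = 1) (hb : ∀ k, b k ≠ 0)
    (P : ℕ → Polynomial ℂ)
    (hP : ∀ n, P n = ∑ k ∈ Finset.range (n + 1), Polynomial.C (a (n - k) * b k) * X ^ k)
    (d : ℕ) (hd : 1 ≤ d)
    (horth : ∃ u : Fin d → (Polynomial ℂ →ₗ[ℂ] ℂ),
      ∀ k : Fin d,
        (∀ m n : ℕ, n > m * d + (k : ℕ) → u k (X ^ m * P n) = 0) ∧
        (∀ m : ℕ, u k (X ^ m * P (m * d + (k : ℕ))) ≠ 0))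
    (r : ℕ → ℂ) (hr : ∀ n, r n = b n / b (n + 1))
    (Δ : ℕ → ℂ) (hΔ0 : Δ 0 = r 0) (hΔ : ∀ n, Δ (n + 1) = r (n + 1) - r n) :
    ∀ n : ℕ,
      (¬ ∀ i : ℕ, i ≤ d → Δ (n + i) = 0) ∧ (¬ ∀ i : ℕ, i ≤ d → a (n + i) = 0) :=
  brenke_d_orthogonal_no_consecutive_zeros_general a b ha0 hb P hP d hd horth r hr Δ hΔ0 hΔ
end

section
/- Let A(t) = ∑_{k≥0} a_k t^k be a formal power series over ℂ with a_0 = 1, and let q ∈ ℂ with q ≠ 0. Suppose that, as formal power series, A(t) = A(qt)·(1 + a_2(1−q²)t² + a_3(1−q³)t³) and A(t) = A(−qt)·(1 + a_2(1−q²)t² + a_3(1+q³)t³), where a_2 and a_3 are the coefficients of A itself. Then a_3 = 0. -/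
open PowerSeries

/-!
Compare the coefficients of `t⁶` in the two relations. Since `q⁶ = (-q)⁶` and `q⁴ = (-q)⁴`, the
contributions of `a₆` and `a₄` agree, and the difference of the two equations leaves
`a₃(1 - q³)q³a₃ + a₃(1 + q³)q³a₃ = 2q³a₃² = 0`.
-/

theorem PowerSeries.coeff_add_three_mul_one_add_C_mul_X_sq_add_C_mul_X_pow_three
    {R : Type*} [CommSemiring R] (f : R⟦X⟧) (b c : R) (n : ℕ) :
    coeff (n + 3) (f * (1 + C b * X ^ 2 + C c * X ^ 3)) =
      coeff (n + 3) f + b * coeff (n + 1) f + c * coeff n f := by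
  have hX2 : coeff (n + 3) (f * (C b * X ^ 2)) = b * coeff (n + 1) f := by
    rw [mul_left_comm, coeff_C_mul, show n + 3 = n + 1 + 2 by omega, coeff_mul_X_pow]
  have hX3 : coeff (n + 3) (f * (C c * X ^ 3)) = c * coeff n f := by
    rw [mul_left_comm, coeff_C_mul, coeff_mul_X_pow]
  rw [mul_add, mul_add, mul_one, map_add, map_add, hX2, hX3]

theorem two_rescaling_relations_force_a3_zero_general
    (A : PowerSeries ℂ)
    (q : ℂ) (hq : q ≠ 0)
    (a2 a3 : ℂ) (ha3 : a3 = PowerSeries.coeff 3 A)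
    (h1 : A = PowerSeries.rescale q A
      * (1 + PowerSeries.C (a2 * (1 - q ^ 2)) * (PowerSeries.X : PowerSeries ℂ) ^ 2
          + PowerSeries.C (a3 * (1 - q ^ 3)) * (PowerSeries.X : PowerSeries ℂ) ^ 3))
    (h2 : A = PowerSeries.rescale (-q) A
      * (1 + PowerSeries.C (a2 * (1 - q ^ 2)) * (PowerSeries.X : PowerSeries ℂ) ^ 2
          + PowerSeries.C (a3 * (1 + q ^ 3)) * (PowerSeries.X : PowerSeries ℂ) ^ 3)) :
    a3 = 0 := by
  have e1 := congrArg (coeff (3 + 3)) h1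
  have e2 := congrArg (coeff (3 + 3)) h2
  rw [coeff_add_three_mul_one_add_C_mul_X_sq_add_C_mul_X_pow_three] at e1 e2
  simp only [coeff_rescale, ← ha3] at e1 e2
  have key : 2 * q ^ 3 * a3 ^ 2 = 0 := by linear_combination e2 - e1
  simpa [hq] using key

/-- If `A(t) = A(qt)(1 + a₂(1−q²)t² + a₃(1−q³)t³)` and
`A(t) = A(−qt)(1 + a₂(1−q²)t² + a₃(1+q³)t³)` for `q ≠ 0`, then `a₃ = 0`. -/
theorem two_rescaling_relations_force_a3_zero
    (A : PowerSeries ℂ) (hA0 : PowerSeries.constantCoeff A = 1)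
    (q : ℂ) (hq : q ≠ 0)
    (a2 a3 : ℂ) (ha2 : a2 = PowerSeries.coeff 2 A) (ha3 : a3 = PowerSeries.coeff 3 A)
    (h1 : A = PowerSeries.rescale q A
      * (1 + PowerSeries.C (a2 * (1 - q ^ 2)) * (PowerSeries.X : PowerSeries ℂ) ^ 2
          + PowerSeries.C (a3 * (1 - q ^ 3)) * (PowerSeries.X : PowerSeries ℂ) ^ 3))
    (h2 : A = PowerSeries.rescale (-q) A
      * (1 + PowerSeries.C (a2 * (1 - q ^ 2)) * (PowerSeries.X : PowerSeries ℂ) ^ 2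
          + PowerSeries.C (a3 * (1 + q ^ 3)) * (PowerSeries.X : PowerSeries ℂ) ^ 3)) :
    a3 = 0 :=
  two_rescaling_relations_force_a3_zero_general A q hq a2 a3 ha3 h1 h2
end

section
/- Let a_1, a_2, a_3, a_4, q ∈ ℂ with q ≠ 0, q³ ≠ 1 and a_1 ≠ 0, let j = exp(2πi/3), set L = −a_1⁴ − 2a_1a_3 + 3a_1²a_2 − a_2² + a_4, and suppose L ≠ 0 and L·r³ + (a_1²a_2 − a_2² − a_1a_3 + a_4)·r² + (a_4 − a_1a_3)·r + a_4 = L·(r − q)(r − jq)(r − j̄q) identically in r. Then: if a_2 = 0 one has a_3 = q³a_1³/(1 − q³) and a_4 = q³a_1⁴/(1 − q³); and if a_2 = a_1² one has a_3 = q³a_1³/(q³ − 1) and a_4 = q³a_1⁴/(q³ − 1). -/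
open Complex

/-! The factor `(r - q)(r - jq)(r - j²q)` is `r³ - q³`, so the hypothesis says that the quadratic
`(a₁²a₂ - a₂² - a₁a₃ + a₄) r² + (a₄ - a₁a₃) r + (a₄ + L q³)` vanishes identically. Its linear and
constant coefficients give `a₄ = a₁a₃` and `a₄ = -L q³`; substituting `a₂ = 0` (resp. `a₂ = a₁²`)
into `L` turns the latter into `a₄ (1 - q³) = q³a₁⁴` (resp. `a₄ (q³ - 1) = q³a₁⁴`). -/

theorem IsPrimitiveRoot.sub_mul_sub_mul_sub_eq_pow_three_sub {R : Type*} [CommRing R] [IsDomain R]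
    {ζ : R} (hζ : IsPrimitiveRoot ζ 3) (r q : R) :
    (r - q) * (r - ζ * q) * (r - ζ ^ 2 * q) = r ^ 3 - q ^ 3 := by
  have hsum : 1 + ζ + ζ ^ 2 = 0 := by
    simpa [Finset.sum_range_succ] using hζ.geom_sum_eq_zero (by norm_num)
  linear_combination (-q * r ^ 2 + ζ * q ^ 2 * r - (ζ - 1) * q ^ 3) * hsum

theorem coeffs_eq_zero_of_forall_quadratic_eq_zero {K : Type*} [Field K] [NeZero (2 : K)]
    {a b c : K} (h : ∀ r : K, a * r ^ 2 + b * r + c = 0) : a = 0 ∧ b = 0 ∧ c = 0 := by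
  have h0 := h 0
  have h1 := h 1
  have hm1 := h (-1)
  have hc : c = 0 := by linear_combination h0
  have ha : 2 * a = 0 := by linear_combination h1 + hm1 - 2 * h0
  have hb : 2 * b = 0 := by linear_combination h1 - hm1
  exact ⟨(mul_eq_zero.mp ha).resolve_left two_ne_zero,
    (mul_eq_zero.mp hb).resolve_left two_ne_zero, hc⟩

theorem characteristic_roots_a3_a4_values_general
    (a1 a2 a3 a4 q : ℂ) (hq3 : q ^ 3 ≠ 1) (ha1 : a1 ≠ 0)
    (j : ℂ) (hj : j = Complex.exp (2 * Real.pi * Complex.I / 3))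
    (L : ℂ) (hL : L = -a1 ^ 4 - 2 * a1 * a3 + 3 * a1 ^ 2 * a2 - a2 ^ 2 + a4)
    (hroots : ∀ r : ℂ,
      L * r ^ 3 + (a1 ^ 2 * a2 - a2 ^ 2 - a1 * a3 + a4) * r ^ 2
        + (a4 - a1 * a3) * r + a4
      = L * (r - q) * (r - j * q) * (r - j ^ 2 * q)) :
    (a2 = 0 → a3 = q ^ 3 * a1 ^ 3 / (1 - q ^ 3) ∧ a4 = q ^ 3 * a1 ^ 4 / (1 - q ^ 3)) ∧
    (a2 = a1 ^ 2 → a3 = q ^ 3 * a1 ^ 3 / (q ^ 3 - 1) ∧ a4 = q ^ 3 * a1 ^ 4 / (q ^ 3 - 1)) := by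
  have hζ : IsPrimitiveRoot j 3 := by
    simpa [hj] using Complex.isPrimitiveRoot_exp 3 three_ne_zero
  have hquad : ∀ r : ℂ, (a1 ^ 2 * a2 - a2 ^ 2 - a1 * a3 + a4) * r ^ 2 + (a4 - a1 * a3) * r
      + (a4 + L * q ^ 3) = 0 := fun r ↦ by
    linear_combination hroots r + L * hζ.sub_mul_sub_mul_sub_eq_pow_three_sub r q
  obtain ⟨-, hlin, hconst⟩ := coeffs_eq_zero_of_forall_quadratic_eq_zero hquad
  have hsolve : ∀ d : ℂ, d ≠ 0 → a4 * d = q ^ 3 * a1 ^ 4 →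
      a3 = q ^ 3 * a1 ^ 3 / d ∧ a4 = q ^ 3 * a1 ^ 4 / d := fun d hd h ↦
    ⟨(eq_div_iff hd).mpr <| mul_left_cancel₀ ha1 <| by linear_combination h - d * hlin,
      (eq_div_iff hd).mpr h⟩
  refine ⟨fun h2 ↦ hsolve _ (sub_ne_zero.mpr hq3.symm) ?_,
    fun h2 ↦ hsolve _ (sub_ne_zero.mpr hq3) ?_⟩
  · subst h2
    linear_combination hconst - q ^ 3 * hL - 2 * q ^ 3 * hlin
  · subst h2
    linear_combination -hconst + q ^ 3 * hL + 2 * q ^ 3 * hlin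

/-- With roots `q, jq, j̄q` of the characteristic cubic and `a₁ ≠ 0`,
`q³ ≠ 1`: if `a₂ = 0` then `a₃ = q³a₁³/(1−q³)`, `a₄ = q³a₁⁴/(1−q³)`;
if `a₂ = a₁²` then `a₃ = q³a₁³/(q³−1)`, `a₄ = q³a₁⁴/(q³−1)`. -/
theorem characteristic_roots_a3_a4_values
    (a1 a2 a3 a4 q : ℂ) (hq : q ≠ 0) (hq3 : q ^ 3 ≠ 1) (ha1 : a1 ≠ 0)
    (j : ℂ) (hj : j = Complex.exp (2 * Real.pi * Complex.I / 3))
    (L : ℂ) (hL : L = -a1 ^ 4 - 2 * a1 * a3 + 3 * a1 ^ 2 * a2 - a2 ^ 2 + a4)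
    (hLne : L ≠ 0)
    (hroots : ∀ r : ℂ,
      L * r ^ 3 + (a1 ^ 2 * a2 - a2 ^ 2 - a1 * a3 + a4) * r ^ 2
        + (a4 - a1 * a3) * r + a4
      = L * (r - q) * (r - j * q) * (r - j ^ 2 * q)) :
    (a2 = 0 → a3 = q ^ 3 * a1 ^ 3 / (1 - q ^ 3) ∧ a4 = q ^ 3 * a1 ^ 4 / (1 - q ^ 3)) ∧
    (a2 = a1 ^ 2 → a3 = q ^ 3 * a1 ^ 3 / (q ^ 3 - 1) ∧ a4 = q ^ 3 * a1 ^ 4 / (q ^ 3 - 1)) :=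
  characteristic_roots_a3_a4_values_general a1 a2 a3 a4 q hq3 ha1 j hj L hL hroots
end

section
/- Let q, a_1 ∈ ℂ with q ≠ 0 and qⁿ ≠ 1 for every n ≥ 1, and let j = exp(2πi/3). Let a : ℕ → ℂ with a_0 = 1 (and with the convention a_m = 0 for m < 0) satisfy, for every n ≥ 1 and every x ∈ {q, jq, j̄q}, the recurrence a_n = x^{n−1}·( x·a_n + a_1(1−x)·a_{n−1} + a_1²(x−1)·a_{n−2} + a_1³·a_{n−3} ). Then for all n ≥ 0: a_{3n+2} = 0, a_{3n+1} = a_1·a_{3n}, and a_{3n} = q^{3n(n+1)/2}·a_1^{3n} / ∏_{k=1}^{n}(1 − q^{3k}). -/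
/-!
Write `Tₙ = aₙ - a₁aₙ₋₁ + a₁²aₙ₋₂`. The recurrence at index `N + 1` reads
`a_{N+1} = xᴺ·a₁T_N + x^{N+1}·T_{N+1}`. Substituting `x = yq` with `y` a cube root of unity, the
right-hand side is a polynomial of degree `< 3` in `y` (after reducing exponents mod 3), and a
polynomial of degree `< 3` vanishing at `1, j, j²` is zero. So the terms of each residue class
vanish separately: for `N ≡ 1` this gives `a_{3m+2} = 0`; for `N ≡ 0` it gives `T_{3m+1} = 0`,
i.e. `a_{3m+1} = a₁a_{3m}`; for `N ≡ 2` it gives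
`a_{3m+3} = q^{3m+3}T_{3m+3} = q^{3m+3}(a_{3m+3} + a₁³a_{3m})`,
a first-order recurrence for `a_{3m}` that telescopes into the product formula.
-/

open Finset

namespace IsPrimitiveRoot

variable {K : Type*} [Field K] {ω : K}

lemma pow_three_eq_one_of_mem (hω : IsPrimitiveRoot ω 3) {y : K}
    (hy : y ∈ ({1, ω, ω ^ 2} : Set K)) : y ^ 3 = 1 := by
  rcases hy with rfl | rfl | rfl
  · exact one_pow 3
  · exact hω.pow_eq_one
  · rw [← pow_mul, mul_comm, pow_mul, hω.pow_eq_one, one_pow]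

lemma eq_zero_of_forall_cube_roots (hω : IsPrimitiveRoot ω 3) {A B C : K}
    (h : ∀ y ∈ ({1, ω, ω ^ 2} : Set K), A + B * y + C * y ^ 2 = 0) :
    A = 0 ∧ B = 0 ∧ C = 0 := by
  have h3 : (3 : K) ≠ 0 := by exact_mod_cast hω.neZero'.out
  have hsum : 1 + ω + ω ^ 2 = 0 := by
    simpa [sum_range_succ] using hω.geom_sum_eq_zero (by norm_num)
  have hω3 := hω.pow_eq_one
  have e0 := h 1 (by simp)
  have e1 := h ω (by simp)
  have e2 := h (ω ^ 2) (by simp)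
  refine ⟨?_, ?_, ?_⟩ <;> refine (mul_eq_zero.mp ?_).resolve_left h3
  · linear_combination e0 + e1 + e2 - (B + C) * hsum - C * ω * hω3
  · linear_combination e0 + ω ^ 2 * e1 + ω * e2 - (A + C) * hsum
      - (2 * B + C * (ω + ω ^ 2)) * hω3
  · linear_combination e0 + ω * e1 + ω ^ 2 * e2 - (A + B) * hsum
      - (B * ω + C * (ω ^ 3 + 2)) * hω3

variable {q c V W : K} (m : ℕ)

lemma pow_mul_eq_zero_of_forall_cube_roots (hω : IsPrimitiveRoot ω 3)
    (h : ∀ y ∈ ({1, ω, ω ^ 2} : Set K), c = (y * q) ^ (3 * m) * V + (y * q) ^ (3 * m + 1) * W) :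
    q ^ (3 * m + 1) * W = 0 := by
  refine (hω.eq_zero_of_forall_cube_roots (A := q ^ (3 * m) * V - c) (C := 0) fun y hy ↦ ?_).2.1
  have hcy := h y hy
  rw [mul_pow, mul_pow, pow_add y, pow_mul y, hω.pow_three_eq_one_of_mem hy, one_pow] at hcy
  linear_combination -hcy

lemma eq_zero_of_forall_cube_roots_three_mul_add_one (hω : IsPrimitiveRoot ω 3)
    (h : ∀ y ∈ ({1, ω, ω ^ 2} : Set K),
      c = (y * q) ^ (3 * m + 1) * V + (y * q) ^ (3 * m + 2) * W) :
    c = 0 := by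
  refine neg_eq_zero.mp (hω.eq_zero_of_forall_cube_roots (B := q ^ (3 * m + 1) * V)
    (C := q ^ (3 * m + 2) * W) fun y hy ↦ ?_).1
  have hcy := h y hy
  rw [mul_pow, mul_pow, pow_add y, pow_add y, pow_mul y, hω.pow_three_eq_one_of_mem hy,
    one_pow] at hcy
  linear_combination -hcy

lemma eq_pow_mul_of_forall_cube_roots_three_mul_add_two (hω : IsPrimitiveRoot ω 3)
    (h : ∀ y ∈ ({1, ω, ω ^ 2} : Set K),
      c = (y * q) ^ (3 * m + 2) * V + (y * q) ^ (3 * m + 3) * W) :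
    c = q ^ (3 * m + 3) * W := by
  refine (sub_eq_zero.mp (hω.eq_zero_of_forall_cube_roots (B := 0)
    (C := q ^ (3 * m + 2) * V) fun y hy ↦ ?_).1).symm
  have hcy := h y hy
  rw [mul_pow, mul_pow, pow_add y, pow_add y, pow_mul y, hω.pow_three_eq_one_of_mem hy,
    one_pow] at hcy
  linear_combination -hcy

end IsPrimitiveRoot

section Recurrence

variable {K : Type*} [Field K]

def SatisfiesRecurrence (c : K) (a : ℤ → K) (x : K) : Prop :=
  ∀ n : ℤ, 1 ≤ n → a n = x ^ (n - 1) * (x * a n + c * (1 - x) * a (n - 1)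
    + c ^ 2 * (x - 1) * a (n - 2) + c ^ 3 * a (n - 3))

def trinomialConv (c : K) (a : ℤ → K) (n : ℤ) : K :=
  a n - c * a (n - 1) + c ^ 2 * a (n - 2)

variable {c q ω : K} {a : ℤ → K}

lemma SatisfiesRecurrence.apply_succ {x : K} (h : SatisfiesRecurrence c a x) (N : ℕ) :
    a (N + 1) = x ^ N * (c * trinomialConv c a N)
      + x ^ (N + 1) * trinomialConv c a (N + 1) := by
  have hN := h (N + 1) (by omega)
  rw [add_sub_cancel_right, zpow_natCast, show (N : ℤ) + 1 - 2 = N - 1 by ring,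
    show (N : ℤ) + 1 - 3 = N - 2 by ring] at hN
  unfold trinomialConv
  rw [add_sub_cancel_right, show (N : ℤ) + 1 - 2 = N - 1 by ring]
  linear_combination hN

variable (m : ℕ)

lemma trinomialConv_three_mul_add_one (hω : IsPrimitiveRoot ω 3)
    (hrec : ∀ y ∈ ({1, ω, ω ^ 2} : Set K), SatisfiesRecurrence c a (y * q)) (hq : q ≠ 0) :
    trinomialConv c a (3 * m + 1) = 0 := by
  have h := hω.pow_mul_eq_zero_of_forall_cube_roots m fun y hy ↦ (hrec y hy).apply_succ (3 * m)
  push_cast at h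
  exact (mul_eq_zero.mp h).resolve_left (pow_ne_zero _ hq)

lemma apply_three_mul_add_two (hω : IsPrimitiveRoot ω 3)
    (hrec : ∀ y ∈ ({1, ω, ω ^ 2} : Set K), SatisfiesRecurrence c a (y * q)) :
    a (3 * m + 2) = 0 := by
  have h := hω.eq_zero_of_forall_cube_roots_three_mul_add_one m
    fun y hy ↦ (hrec y hy).apply_succ (3 * m + 1)
  exact_mod_cast h

lemma apply_three_mul_add_three (hω : IsPrimitiveRoot ω 3)
    (hrec : ∀ y ∈ ({1, ω, ω ^ 2} : Set K), SatisfiesRecurrence c a (y * q)) :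
    a (3 * m + 3) = q ^ (3 * m + 3) * trinomialConv c a (3 * m + 3) := by
  have h := hω.eq_pow_mul_of_forall_cube_roots_three_mul_add_two m
    fun y hy ↦ (hrec y hy).apply_succ (3 * m + 2)
  exact_mod_cast h

lemma apply_three_mul_add_one (hω : IsPrimitiveRoot ω 3)
    (hrec : ∀ y ∈ ({1, ω, ω ^ 2} : Set K), SatisfiesRecurrence c a (y * q)) (hq : q ≠ 0)
    (hneg : a (-1) = 0) : a (3 * m + 1) = c * a (3 * m) := by
  have h := trinomialConv_three_mul_add_one m hω hrec hq
  have hprev : a (3 * m - 1) = 0 := by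
    rcases m with _ | m
    · simpa using hneg
    · rw [Nat.cast_succ, show 3 * ((m : ℤ) + 1) - 1 = 3 * m + 2 by ring]
      exact apply_three_mul_add_two m hω hrec
  unfold trinomialConv at h
  rw [add_sub_cancel_right, show 3 * (m : ℤ) + 1 - 2 = 3 * m - 1 by ring, hprev] at h
  linear_combination h

lemma apply_three_mul_succ_mul_one_sub (hω : IsPrimitiveRoot ω 3)
    (hrec : ∀ y ∈ ({1, ω, ω ^ 2} : Set K), SatisfiesRecurrence c a (y * q)) (hq : q ≠ 0)
    (hneg : a (-1) = 0) :
    a (3 * (m + 1)) * (1 - (q ^ 3) ^ (m + 1)) = (q ^ 3) ^ (m + 1) * c ^ 3 * a (3 * m) := by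
  have h := apply_three_mul_add_three m hω hrec
  have h2 := apply_three_mul_add_two m hω hrec
  have h1 := apply_three_mul_add_one m hω hrec hq hneg
  unfold trinomialConv at h
  rw [show 3 * (m : ℤ) + 3 - 1 = 3 * m + 2 by ring, show 3 * (m : ℤ) + 3 - 2 = 3 * m + 1 by ring,
    h2, h1] at h
  rw [← pow_mul, show 3 * (m + 1) = 3 * m + 3 by ring, show 3 * ((m : ℤ) + 1) = 3 * m + 3 by ring]
  linear_combination h

end Recurrence

lemma eq_pow_mul_pow_div_prod_of_mul_one_sub {K : Type*} [Field K] {r c : K} {b : ℕ → K}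
    (h0 : b 0 = 1) (hr : ∀ m : ℕ, r ^ (m + 1) ≠ 1)
    (hb : ∀ m : ℕ, b (m + 1) * (1 - r ^ (m + 1)) = r ^ (m + 1) * c * b m) (m : ℕ) :
    b m = r ^ (m * (m + 1) / 2) * c ^ m / ∏ k ∈ range m, (1 - r ^ (k + 1)) := by
  induction m with
  | zero => simp [h0]
  | succ m ih =>
    have hm : 1 - r ^ (m + 1) ≠ 0 := sub_ne_zero.mpr (hr m).symm
    have hexp : (m + 1) * (m + 1 + 1) / 2 = m * (m + 1) / 2 + (m + 1) := by
      rw [show (m + 1) * (m + 1 + 1) = m * (m + 1) + (m + 1) * 2 by ring,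
        Nat.add_mul_div_right _ _ two_pos]
    rw [eq_div_iff_mul_eq hm |>.mpr (hb m), ih, prod_range_succ, hexp]
    field_simp
    ring

/-- Solution of the recurrence
`aₙ = x^{n−1}(x·aₙ + a₁(1−x)aₙ₋₁ + a₁²(x−1)aₙ₋₂ + a₁³aₙ₋₃)` for `x ∈ {q, jq, j̄q}`. -/
theorem recurrence_solution_case_a2_zero
    (q a1 : ℂ) (hq : q ≠ 0) (hqn : ∀ n : ℕ, 1 ≤ n → q ^ n ≠ 1)
    (j : ℂ) (hj : j = Complex.exp (2 * Real.pi * Complex.I / 3))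
    (a : ℤ → ℂ) (ha0 : a 0 = 1) (haneg : ∀ m : ℤ, m < 0 → a m = 0)
    (hrec : ∀ n : ℤ, 1 ≤ n → ∀ x ∈ ({q, j * q, j ^ 2 * q} : Set ℂ),
      a n = x ^ (n - 1) * (x * a n + a1 * (1 - x) * a (n - 1)
        + a1 ^ 2 * (x - 1) * a (n - 2) + a1 ^ 3 * a (n - 3))) :
    ∀ n : ℕ,
      a (3 * (n : ℤ) + 2) = 0 ∧
      a (3 * (n : ℤ) + 1) = a1 * a (3 * (n : ℤ)) ∧
      a (3 * (n : ℤ)) = q ^ (3 * n * (n + 1) / 2) * a1 ^ (3 * n)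
        / ∏ k ∈ Finset.range n, (1 - q ^ (3 * (k + 1))) := by
  have hj3 : IsPrimitiveRoot j 3 :=
    hj ▸ by simpa using Complex.isPrimitiveRoot_exp 3 (by norm_num)
  have hrec' : ∀ y ∈ ({1, j, j ^ 2} : Set ℂ), SatisfiesRecurrence a1 a (y * q) := by
    intro y hy n hn
    exact hrec n hn _ (by rcases hy with rfl | rfl | rfl <;> simp)
  have hneg := haneg (-1) (by norm_num)
  have hr (m : ℕ) : (q ^ 3) ^ (m + 1) ≠ 1 := by rw [← pow_mul]; exact hqn _ (by omega)
  have hb := eq_pow_mul_pow_div_prod_of_mul_one_sub (b := fun m ↦ a (3 * m))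
    (by simpa using ha0) hr fun m ↦ by
      exact_mod_cast apply_three_mul_succ_mul_one_sub m hj3 hrec' hq hneg
  intro n
  refine ⟨apply_three_mul_add_two n hj3 hrec', apply_three_mul_add_one n hj3 hrec' hq hneg, ?_⟩
  rw [hb n, mul_assoc, Nat.mul_div_assoc 3 (Nat.even_mul_succ_self n).two_dvd]
  simp only [← pow_mul]
end
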